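/- Let u ∈ C²(ℝ) be positive, bounded, with u nonincreasing on [x₂,∞), and suppose u satisfies −cu' + (vu)' = u'' + u(1−u) where v, v' are continuous. Let underline_u(x) = A sin(π(x − x₂)/(Rσ)) on [x₂, x₂+Rσ] with A > 0, and suppose at some x₀ ∈ (x₂, x₂+Rσ) we have u(x₀) = underline_u(x₀), u'(x₀) = underline_u'(x₀) ≤ 0, u''(x₀) ≥ underline_u''(x₀), and v(x₀) ≥ c. If additionally u(x₀)² < underline_u(x₀)·θ/σ and v'(x₀) < |χ|θ/σ², then 0 > underline_u(x₀)·(1 − θ/σ − |χ|θ/σ² − π²/(R²σ²)). -/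

import Mathlib

/-!
At the contact point the PDE gives `u'' = (v - c) u' + v' u - u (1 - u)`. The drift term is
`≤ 0` since `v ≥ c` and `u' = ul' ≤ 0`, the reaction terms are controlled by the bounds on
`u²` and `v'`, and `u'' ≥ ul'' = -(π/(Rσ))² ul`; since `u = ul > 0` there, this is the claim.
-/

open Real

theorem hasDerivAt_sin_mul_sub (a b x : ℝ) :
    HasDerivAt (fun y => sin (a * (y - b))) (a * cos (a * (x - b))) x := by
  simpa [mul_comm] using ((hasDerivAt_id x).sub_const b |>.const_mul a).sin

theorem hasDerivAt_cos_mul_sub (a b x : ℝ) :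
    HasDerivAt (fun y => cos (a * (y - b))) (-(a * sin (a * (x - b)))) x := by
  simpa [mul_comm] using ((hasDerivAt_id x).sub_const b |>.const_mul a).cos

theorem deriv_deriv_const_mul_sin_mul_sub (A a b x : ℝ) :
    deriv (deriv fun y => A * sin (a * (y - b))) x = -a ^ 2 * (A * sin (a * (x - b))) := by
  have h : deriv (fun y => A * sin (a * (y - b))) = fun y => A * a * cos (a * (y - b)) :=
    funext fun y => by simpa [mul_assoc] using ((hasDerivAt_sin_mul_sub a b y).const_mul A).deriv
  rw [h, ((hasDerivAt_cos_mul_sub a b x).const_mul (A * a)).deriv]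
  ring

theorem deriv_deriv_eq_of_pde {u v : ℝ → ℝ} {c x : ℝ} (hu : DifferentiableAt ℝ u x)
    (hv : DifferentiableAt ℝ v x)
    (hpde : -c * deriv u x + deriv (fun y => v y * u y) x = deriv (deriv u) x + u x * (1 - u x)) :
    deriv (deriv u) x = (v x - c) * deriv u x + deriv v x * u x - u x * (1 - u x) := by
  rw [deriv_fun_mul hv hu] at hpde
  linarith

theorem stmt16_general (u v : ℝ → ℝ) (c χ θ σ R A x₂ x₀ : ℝ)
    (hu : ContDiff ℝ 2 u) (hv : Differentiable ℝ v)
    (hupos : ∀ x, 0 < u x)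
    (heq : ∀ x, -c * deriv u x + deriv (fun y => v y * u y) x
        = deriv (deriv u) x + u x * (1 - u x)) :
    let ul : ℝ → ℝ := fun x => A * Real.sin (π * (x - x₂) / (R * σ))
    x₀ ∈ Set.Ioo x₂ (x₂ + R * σ) →
    u x₀ = ul x₀ →
    deriv u x₀ = deriv ul x₀ →
    deriv ul x₀ ≤ 0 →
    deriv (deriv ul) x₀ ≤ deriv (deriv u) x₀ →
    c ≤ v x₀ →
    u x₀ ^ 2 < ul x₀ * θ / σ →
    deriv v x₀ < |χ| * θ / σ ^ 2 →
    0 > ul x₀ * (1 - θ / σ - |χ| * θ / σ ^ 2 - π ^ 2 / (R ^ 2 * σ ^ 2)) := by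
  intro ul _ hval hd1 hd1le hd2 hvc hsq hv'
  have hul : ul = fun x => A * sin (π / (R * σ) * (x - x₂)) := by
    funext x; simp only [ul, mul_div_right_comm]
  have hul'' : deriv (deriv ul) x₀ = -(π ^ 2 / (R ^ 2 * σ ^ 2)) * ul x₀ := by
    rw [hul, deriv_deriv_const_mul_sin_mul_sub, div_pow, mul_pow]
  have hu'' := deriv_deriv_eq_of_pde (hu.differentiable two_ne_zero x₀) (hv x₀) (heq x₀)
  have hdrift : (v x₀ - c) * deriv u x₀ ≤ 0 :=
    mul_nonpos_of_nonneg_of_nonpos (sub_nonneg.2 hvc) (hd1 ▸ hd1le)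
  have hreact : deriv v x₀ * u x₀ < |χ| * θ / σ ^ 2 * u x₀ :=
    mul_lt_mul_of_pos_right hv' (hupos x₀)
  rw [hval, mul_div_assoc] at hsq
  rw [hval] at hu'' hreact
  linarith

/-- Touching-point computation for the sine subsolution in case two of the fast-wave
theorem: at a contact point `x₀` one gets
`0 > underline_u(x₀)(1 − θ/σ − |χ|θ/σ² − π²/(R²σ²))`. -/
theorem stmt16 (u v : ℝ → ℝ) (c χ θ σ R A x₂ x₀ : ℝ)
    (hσ : 0 < σ) (hR : 0 < R) (hA : 0 < A) (hθ : 0 < θ)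
    (hu : ContDiff ℝ 2 u) (hv : Differentiable ℝ v)
    (hupos : ∀ x, 0 < u x) (hubdd : ∃ M, ∀ x, u x ≤ M)
    (hmono : AntitoneOn u (Set.Ici x₂))
    (heq : ∀ x, -c * deriv u x + deriv (fun y => v y * u y) x
        = deriv (deriv u) x + u x * (1 - u x)) :
    let ul : ℝ → ℝ := fun x => A * Real.sin (π * (x - x₂) / (R * σ))
    x₀ ∈ Set.Ioo x₂ (x₂ + R * σ) →
    u x₀ = ul x₀ →
    deriv u x₀ = deriv ul x₀ →
    deriv ul x₀ ≤ 0 →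
    deriv (deriv ul) x₀ ≤ deriv (deriv u) x₀ →
    c ≤ v x₀ →
    u x₀ ^ 2 < ul x₀ * θ / σ →
    deriv v x₀ < |χ| * θ / σ ^ 2 →
    0 > ul x₀ * (1 - θ / σ - |χ| * θ / σ ^ 2 - π ^ 2 / (R ^ 2 * σ ^ 2)) :=
  stmt16_general u v c χ θ σ R A x₂ x₀ hu hv hupos heq
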